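/- arXiv:2308.15714 — 2 statements merged into one kernel-verified Lean document; each statement's English description precedes it below -/
import Mathlib

section
/- Let p ≥ 3 be odd, α = (p+1)/2, and G=(V,E) a (p,2)-flex-connected graph with unsafe edge set U. If A and B are crossing (p,3)-violated sets, then E(A\B, B\A) and E(A∩B, V\(A∪B)) are empty; moreover among the four residual edge sets E(A∩B,A\B), E(A∩B,B\A), E(A\B,V\(A∪B)), E(B\A,V\(A∪B)), two adjacent ones (sharing a corner region) have cardinality α and contain at most one unsafe edge each, while the other two have cardinality α+1. -/
open Finset

variable {V E : Type}

/-- The cut of a vertex set `S`: edges with exactly one endpoint in `S`. -/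
def cutOf [Fintype E] [DecidableEq V] (ends : E → V × V) (S : Finset V) : Finset E :=
  Finset.univ.filter (fun e => Xor ((ends e).1 ∈ S) ((ends e).2 ∈ S))

/-- Edges with one endpoint in `X` and the other in `Y`. -/
def btw [Fintype E] [DecidableEq V] (ends : E → V × V) (X Y : Finset V) : Finset E :=
  Finset.univ.filter (fun e =>
    ((ends e).1 ∈ X ∧ (ends e).2 ∈ Y) ∨ ((ends e).1 ∈ Y ∧ (ends e).2 ∈ X))

/-- `A` and `B` cross. -/
def crosses [Fintype V] [DecidableEq V] (A B : Finset V) : Prop :=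
  (A \ B).Nonempty ∧ (A ∩ B).Nonempty ∧ (B \ A).Nonempty ∧ ((A ∪ B)ᶜ).Nonempty

/-- `(p,2)`-flex-connectivity: after removing any at most 2 unsafe edges,
every nonempty proper cut has at least `p` edges. -/
def flexConn [Fintype V] [Fintype E] [DecidableEq V] [DecidableEq E]
    (p : ℕ) (ends : E → V × V) (U : Finset E) : Prop :=
  ∀ F ⊆ U, F.card ≤ 2 → ∀ S : Finset V, S.Nonempty → S ≠ Finset.univ →
    p ≤ (cutOf ends S \ F).card

/-- A `(p,3)`-violated set: its cut has exactly `p+2` edges, at least 3 unsafe. -/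
def violatedSet [Fintype E] [DecidableEq V] [DecidableEq E]
    (p : ℕ) (ends : E → V × V) (U : Finset E) (S : Finset V) : Prop :=
  (cutOf ends S).card = p + 2 ∧ 3 ≤ (cutOf ends S ∩ U).card

instance [Fintype E] [DecidableEq V] [DecidableEq E]
    (p : ℕ) (ends : E → V × V) (U : Finset E) (S : Finset V) :
    Decidable (violatedSet p ends U S) := by unfold violatedSet; infer_instance

/-- `A` amenably crosses `B`. -/
def amenablyCrosses [Fintype V] [Fintype E] [DecidableEq V] [DecidableEq E]
    (ends : E → V × V) (U : Finset E) (A B : Finset V) : Prop :=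
  crosses A B ∧
    (btw ends (A ∩ B) (B \ A) ∩ U = ∅ ∨ btw ends (A \ B) (A ∪ B)ᶜ ∩ U = ∅)


/-! Colour the vertices by the regions `A \ B, A ∩ B, B \ A, (A ∪ B)ᶜ`, in this cyclic order;
consecutive pairs of regions form `A, B, Aᶜ, Bᶜ`, all `(p,3)`-violated. Edge counting gives, for
the cut sizes `c i` of the regions, `c i + c (i+1) = p + 2 + 2 |E(X i, X (i+1))|` and
`c i + c (i+2) + 2 |E(X (i+1), X (i+3))| = 2p + 4`, with the corresponding lower bounds `3` and `6`
for unsafe edges, while flex-connectivity gives `c i ≥ p + min 2 (unsafe edges of δ(X i))`.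
As `p` is odd, consecutive `c i` have opposite parity. A region with `c i = p` has no unsafe cut
edge, which pushes both neighbours to `≥ p + 3`; two opposite regions with `c ≤ p + 1` force two
unsafe edges on the other diagonal. Hence all `c i > p`, both diagonals are empty, and the cut
sizes around the square are `p+1, p+2, p+3, p+2`, which determines the four sides. -/

lemma card_inter_eq_sum [DecidableEq E] (S W : Finset E) :
    #(S ∩ W) = ∑ e ∈ W, if e ∈ S then 1 else 0 := by
  rw [← card_filter, filter_mem_eq_inter, inter_comm]

section Cuts

variable [Fintype E] [DecidableEq V] (ends : E → V × V)

lemma mem_cutOf {S : Finset V} {e : E} :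
    e ∈ cutOf ends S ↔ Xor ((ends e).1 ∈ S) ((ends e).2 ∈ S) := by
  simp [cutOf]

lemma mem_btw {X Y : Finset V} {e : E} :
    e ∈ _root_.btw ends X Y ↔
      ((ends e).1 ∈ X ∧ (ends e).2 ∈ Y) ∨ ((ends e).1 ∈ Y ∧ (ends e).2 ∈ X) := by
  simp [_root_.btw]

lemma btw_comm (X Y : Finset V) : btw ends X Y = btw ends Y X := by
  ext e; simp only [mem_btw]; tauto

lemma cutOf_compl [Fintype V] (S : Finset V) : cutOf ends Sᶜ = cutOf ends S := by
  ext e; simp only [mem_cutOf, mem_compl]; unfold Xor; tauto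

lemma btw_subset_cutOf {X Y : Finset V} (h : Disjoint X Y) : btw ends X Y ⊆ cutOf ends X := by
  intro e he
  rw [mem_btw] at he
  rw [mem_cutOf]
  rcases he with ⟨h1, h2⟩ | ⟨h1, h2⟩
  · exact Or.inl ⟨h1, disjoint_right.1 h h2⟩
  · exact Or.inr ⟨h2, disjoint_right.1 h h1⟩

end Cuts

section Region

variable [Fintype V] (f : V → Fin 4)

def region (i : Fin 4) : Finset V := univ.filter (f · = i)

lemma mem_region {v : V} {i : Fin 4} : v ∈ region f i ↔ f v = i := by simp [region]

lemma disjoint_region {i j : Fin 4} (h : i ≠ j) : Disjoint (region f i) (region f j) :=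
  disjoint_filter.2 fun _ _ hi hj => h (hi ▸ hj)

end Region

section Coloring

variable [Fintype V] [Fintype E] [DecidableEq V] [DecidableEq E] (ends : E → V × V)
  (f : V → Fin 4) (W : Finset E)

def sideCard (i : Fin 4) : ℕ := #(btw ends (region f i) (region f (i + 1)) ∩ W)

def diagCard (i : Fin 4) : ℕ := #(btw ends (region f i) (region f (i + 2)) ∩ W)

lemma card_cutOf_region_add_card_cutOf_region_succ (i : Fin 4) :
    #(cutOf ends (region f i) ∩ W) + #(cutOf ends (region f (i + 1)) ∩ W) =
      #(cutOf ends (region f i ∪ region f (i + 1)) ∩ W) + 2 * sideCard ends f W i := by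
  simp only [sideCard, card_inter_eq_sum, ← sum_add_distrib, mul_sum]
  refine sum_congr rfl fun e _ => ?_
  simp only [mem_cutOf, mem_btw, mem_union, mem_region]
  -- an edge contributes according to the colours of its two ends only: a finite check
  generalize f (ends e).1 = a, f (ends e).2 = b
  revert i a b; decide

lemma card_cutOf_region_add_card_cutOf_region_opposite (i : Fin 4) :
    #(cutOf ends (region f i) ∩ W) + #(cutOf ends (region f (i + 2)) ∩ W) +
        2 * diagCard ends f W (i + 1) =
      #(cutOf ends (region f i ∪ region f (i + 1)) ∩ W) +
        #(cutOf ends (region f (i + 1) ∪ region f (i + 2)) ∩ W) := by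
  simp only [diagCard, card_inter_eq_sum, ← sum_add_distrib, mul_sum]
  refine sum_congr rfl fun e _ => ?_
  simp only [mem_cutOf, mem_btw, mem_union, mem_region]
  generalize f (ends e).1 = a, f (ends e).2 = b
  revert i a b; decide

lemma sideCard_le_card_cutOf_region (i : Fin 4) :
    sideCard ends f W i ≤ #(cutOf ends (region f i) ∩ W) :=
  card_le_card <| inter_subset_inter_right <|
    btw_subset_cutOf ends <| disjoint_region f (by simp)

lemma sideCard_le_card_cutOf_region_succ (i : Fin 4) :
    sideCard ends f W i ≤ #(cutOf ends (region f (i + 1)) ∩ W) := by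
  refine card_le_card <| inter_subset_inter_right ?_
  rw [btw_comm]
  exact btw_subset_cutOf ends <| disjoint_region f (by simp)

end Coloring

section Flex

variable [Fintype V] [Fintype E] [DecidableEq V] [DecidableEq E] {p : ℕ} {ends : E → V × V}
  {U : Finset E}

lemma flexConn.add_min_le_card_cutOf (hflex : flexConn p ends U) {S : Finset V}
    (hS : S.Nonempty) (hS' : S ≠ univ) :
    p + min 2 #(cutOf ends S ∩ U) ≤ #(cutOf ends S) := by
  obtain ⟨F, hF, hFcard⟩ := exists_subset_card_eq (min_le_right 2 #(cutOf ends S ∩ U))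
  have hcut := hflex F (hF.trans inter_subset_right) (hFcard ▸ min_le_left _ _) S hS hS'
  rw [card_sdiff_of_subset (hF.trans inter_subset_left)] at hcut
  have := card_le_card (hF.trans inter_subset_left)
  omega

end Flex

/-- The regions `region f i` are arranged in a cycle, and any two consecutive ones together form a
`(p,3)`-violated set. -/
structure IsViolatedSquare [Fintype V] [Fintype E] [DecidableEq V] [DecidableEq E] (p : ℕ)
    (ends : E → V × V) (U : Finset E) (f : V → Fin 4) : Prop where
  surjective : Function.Surjective f
  violated (i : Fin 4) : violatedSet p ends U (region f i ∪ region f (i + 1))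

namespace IsViolatedSquare

variable [Fintype V] [Fintype E] [DecidableEq V] [DecidableEq E] {p : ℕ} {ends : E → V × V}
  {U : Finset E} {f : V → Fin 4} (hsq : IsViolatedSquare p ends U f)
include hsq

lemma add_min_le_card_cutOf_region (hflex : flexConn p ends U) (i : Fin 4) :
    p + min 2 #(cutOf ends (region f i) ∩ U) ≤ #(cutOf ends (region f i)) := by
  obtain ⟨v, hv⟩ := hsq.surjective i
  obtain ⟨w, hw⟩ := hsq.surjective (i + 1)
  refine hflex.add_min_le_card_cutOf ⟨v, (mem_region f).2 hv⟩ fun h => ?_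
  have := (mem_region f).1 (h ▸ mem_univ w)
  simp [← this] at hw

lemma card_cutOf_region_add_succ (i : Fin 4) :
    #(cutOf ends (region f i)) + #(cutOf ends (region f (i + 1))) =
      p + 2 + 2 * sideCard ends f univ i := by
  have := card_cutOf_region_add_card_cutOf_region_succ ends f univ i
  simp only [inter_univ] at this
  rw [this, (hsq.violated i).1]

lemma three_le_card_cutOf_region_inter_add_succ (i : Fin 4) :
    3 ≤ #(cutOf ends (region f i) ∩ U) + #(cutOf ends (region f (i + 1)) ∩ U) := by
  rw [card_cutOf_region_add_card_cutOf_region_succ]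
  linarith [(hsq.violated i).2]

lemma card_cutOf_region_add_opposite (i : Fin 4) :
    #(cutOf ends (region f i)) + #(cutOf ends (region f (i + 2))) +
      2 * diagCard ends f univ (i + 1) = 2 * p + 4 := by
  have h := card_cutOf_region_add_card_cutOf_region_opposite ends f univ i
  have v₀ := (hsq.violated i).1
  have v₁ := (hsq.violated (i + 1)).1
  simp only [inter_univ, add_assoc, Fin.reduceAdd] at h v₁
  omega

lemma six_le_card_cutOf_region_inter_add_opposite (i : Fin 4) :
    6 ≤ #(cutOf ends (region f i) ∩ U) + #(cutOf ends (region f (i + 2)) ∩ U) +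
      2 * diagCard ends f univ (i + 1) := by
  have hdiag : diagCard ends f U (i + 1) ≤ diagCard ends f univ (i + 1) :=
    card_le_card (inter_subset_inter_left (subset_univ U))
  have h := card_cutOf_region_add_card_cutOf_region_opposite ends f U i
  have v₀ := (hsq.violated i).2
  have v₁ := (hsq.violated (i + 1)).2
  simp only [add_assoc, Fin.reduceAdd] at h v₁
  omega

variable (hflex : flexConn p ends U) (hp : Odd p)
include hflex hp

lemma lt_card_cutOf_region (i : Fin 4) : p < #(cutOf ends (region f i)) := by
  have h₀ := hsq.add_min_le_card_cutOf_region hflex i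
  have h₁ := hsq.add_min_le_card_cutOf_region hflex (i + 1)
  have h₃ := hsq.add_min_le_card_cutOf_region hflex (i + 3)
  have s₀ := hsq.card_cutOf_region_add_succ i
  have s₃ := hsq.card_cutOf_region_add_succ (i + 3)
  have u₀ := hsq.three_le_card_cutOf_region_inter_add_succ i
  have u₃ := hsq.three_le_card_cutOf_region_inter_add_succ (i + 3)
  have o₁ := hsq.card_cutOf_region_add_opposite (i + 1)
  simp only [add_assoc, Fin.reduceAdd, add_zero] at s₃ u₃ o₁
  obtain ⟨m, rfl⟩ := hp
  omega

lemma diagCard_univ_eq_zero (i : Fin 4) : diagCard ends f univ i = 0 := by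
  have h₁ := hsq.lt_card_cutOf_region hflex hp (i + 1)
  have h₃ := hsq.lt_card_cutOf_region hflex hp (i + 3)
  have f₁ := hsq.add_min_le_card_cutOf_region hflex (i + 1)
  have f₃ := hsq.add_min_le_card_cutOf_region hflex (i + 3)
  have o := hsq.card_cutOf_region_add_opposite (i + 3)
  have ou := hsq.six_le_card_cutOf_region_inter_add_opposite (i + 3)
  simp only [add_assoc, Fin.reduceAdd, add_zero] at o ou
  omega

lemma card_cutOf_region_eq_of_le (i : Fin 4) (h : #(cutOf ends (region f i)) ≤ p + 1) :
    #(cutOf ends (region f i)) = p + 1 ∧ #(cutOf ends (region f (i + 1))) = p + 2 ∧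
      #(cutOf ends (region f (i + 2))) = p + 3 ∧ #(cutOf ends (region f (i + 3))) = p + 2 := by
  have h₀ := hsq.lt_card_cutOf_region hflex hp i
  have h₁ := hsq.lt_card_cutOf_region hflex hp (i + 1)
  have h₃ := hsq.lt_card_cutOf_region hflex hp (i + 3)
  have o₀ := hsq.card_cutOf_region_add_opposite i
  have o₁ := hsq.card_cutOf_region_add_opposite (i + 1)
  have s₀ := hsq.card_cutOf_region_add_succ i
  have s₃ := hsq.card_cutOf_region_add_succ (i + 3)
  simp only [add_assoc, Fin.reduceAdd, add_zero, hsq.diagCard_univ_eq_zero hflex hp]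
    at o₀ o₁ s₃
  obtain ⟨m, rfl⟩ := hp
  omega

lemma exists_card_cutOf_region_le : ∃ i, #(cutOf ends (region f i)) ≤ p + 1 := by
  by_contra! h
  have s₀ := hsq.card_cutOf_region_add_succ 0
  have o₀ := hsq.card_cutOf_region_add_opposite 0
  have o₁ := hsq.card_cutOf_region_add_opposite 1
  simp only [Fin.reduceAdd, hsq.diagCard_univ_eq_zero hflex hp] at s₀ o₀ o₁
  have := h 0; have := h 1; have := h 2; have := h 3
  obtain ⟨m, rfl⟩ := hp
  omega

theorem exists_thin_corner :
    ∃ i, sideCard ends f univ i = (p + 1) / 2 ∧ sideCard ends f U i ≤ 1 ∧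
      sideCard ends f univ (i + 3) = (p + 1) / 2 ∧ sideCard ends f U (i + 3) ≤ 1 ∧
      sideCard ends f univ (i + 1) = (p + 1) / 2 + 1 ∧
      sideCard ends f univ (i + 2) = (p + 1) / 2 + 1 := by
  obtain ⟨i, hi⟩ := hsq.exists_card_cutOf_region_le hflex hp
  obtain ⟨c₀, c₁, c₂, c₃⟩ := hsq.card_cutOf_region_eq_of_le hflex hp i hi
  have f₀ := hsq.add_min_le_card_cutOf_region hflex i
  have u₀ := sideCard_le_card_cutOf_region ends f U i
  have u₃ := sideCard_le_card_cutOf_region_succ ends f U (i + 3)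
  have s₀ := hsq.card_cutOf_region_add_succ i
  have s₁ := hsq.card_cutOf_region_add_succ (i + 1)
  have s₂ := hsq.card_cutOf_region_add_succ (i + 2)
  have s₃ := hsq.card_cutOf_region_add_succ (i + 3)
  simp only [add_assoc, Fin.reduceAdd, add_zero] at u₃ s₁ s₂ s₃
  obtain ⟨m, rfl⟩ := hp
  refine ⟨i, ?_, ?_, ?_, ?_, ?_, ?_⟩ <;> omega

end IsViolatedSquare

def crossColoring [DecidableEq V] (A B : Finset V) (v : V) : Fin 4 :=
  if v ∈ A then (if v ∈ B then 1 else 0) else (if v ∈ B then 2 else 3)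

section CrossingSets

variable [Fintype V] [Fintype E] [DecidableEq V] [DecidableEq E] {p : ℕ} {ends : E → V × V}
  {U : Finset E} {A B : Finset V}

omit [Fintype E] [DecidableEq E] in
lemma region_crossColoring :
    region (crossColoring A B) = ![A \ B, A ∩ B, B \ A, (A ∪ B)ᶜ] := by
  funext i
  fin_cases i <;> ext v <;> by_cases hA : v ∈ A <;> by_cases hB : v ∈ B <;>
    simp [mem_region, crossColoring, hA, hB]

omit [Fintype E] [DecidableEq E] in
lemma region_crossColoring_union_succ (i : Fin 4) :
    region (crossColoring A B) i ∪ region (crossColoring A B) (i + 1) =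
      ![A, B, Aᶜ, Bᶜ] i := by
  fin_cases i <;> ext v <;> by_cases hA : v ∈ A <;> by_cases hB : v ∈ B <;>
    simp [mem_region, crossColoring, hA, hB]

lemma violatedSet_compl {S : Finset V} (h : violatedSet p ends U S) :
    violatedSet p ends U Sᶜ := by
  rwa [violatedSet, cutOf_compl]

lemma isViolatedSquare_crossColoring (hA : violatedSet p ends U A)
    (hB : violatedSet p ends U B) (hcross : crosses A B) :
    IsViolatedSquare p ends U (crossColoring A B) where
  surjective i := by
    obtain ⟨v, hv⟩ : (region (crossColoring A B) i).Nonempty := by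
      rw [region_crossColoring]
      fin_cases i
      exacts [hcross.1, hcross.2.1, hcross.2.2.1, hcross.2.2.2]
    exact ⟨v, (mem_region _).1 hv⟩
  violated i := by
    rw [region_crossColoring_union_succ]
    fin_cases i
    exacts [hA, hB, violatedSet_compl hA, violatedSet_compl hB]

end CrossingSets

theorem stmt11_general [Fintype V] [Fintype E] [DecidableEq V] [DecidableEq E]
    (p : ℕ) (hodd : Odd p) (ends : E → V × V) (U : Finset E)
    (hflex : flexConn p ends U) (A B : Finset V)
    (hA : violatedSet p ends U A) (hB : violatedSet p ends U B)
    (hcross : crosses A B) :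
    btw ends (A \ B) (B \ A) = ∅ ∧
    btw ends (A ∩ B) (A ∪ B)ᶜ = ∅ ∧
    (let α := (p + 1) / 2
     let e₁ := btw ends (A ∩ B) (A \ B)
     let e₂ := btw ends (A ∩ B) (B \ A)
     let e₃ := btw ends (A \ B) (A ∪ B)ᶜ
     let e₄ := btw ends (B \ A) (A ∪ B)ᶜ
     -- two adjacent residual edges are thin of size α, the other two have size α+1
     (e₁.card = α ∧ (e₁ ∩ U).card ≤ 1 ∧ e₂.card = α ∧ (e₂ ∩ U).card ≤ 1 ∧
        e₃.card = α + 1 ∧ e₄.card = α + 1) ∨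
     (e₁.card = α ∧ (e₁ ∩ U).card ≤ 1 ∧ e₃.card = α ∧ (e₃ ∩ U).card ≤ 1 ∧
        e₂.card = α + 1 ∧ e₄.card = α + 1) ∨
     (e₂.card = α ∧ (e₂ ∩ U).card ≤ 1 ∧ e₄.card = α ∧ (e₄ ∩ U).card ≤ 1 ∧
        e₁.card = α + 1 ∧ e₃.card = α + 1) ∨
     (e₃.card = α ∧ (e₃ ∩ U).card ≤ 1 ∧ e₄.card = α ∧ (e₄ ∩ U).card ≤ 1 ∧
        e₁.card = α + 1 ∧ e₂.card = α + 1)) := by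
  have hsq := isViolatedSquare_crossColoring hA hB hcross
  have hdiag := hsq.diagCard_univ_eq_zero hflex hodd
  obtain ⟨i, hthin⟩ := hsq.exists_thin_corner hflex hodd
  simp only [sideCard, diagCard, region_crossColoring, inter_univ, card_eq_zero] at hthin hdiag
  refine ⟨hdiag 0, hdiag 1, ?_⟩
  fin_cases i <;>
    simp only [Fin.reduceAdd, Fin.zero_eta, Fin.mk_one, Fin.reduceFinMk, Matrix.cons_val,
      btw_comm ends (A \ B) (A ∩ B), btw_comm ends (A ∪ B)ᶜ (A \ B)] at hthin ⊢ <;>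
    omega

theorem stmt11 [Fintype V] [Fintype E] [DecidableEq V] [DecidableEq E]
    (p : ℕ) (hp : 3 ≤ p) (hodd : Odd p) (ends : E → V × V) (U : Finset E)
    (hflex : flexConn p ends U) (A B : Finset V)
    (hA : violatedSet p ends U A) (hB : violatedSet p ends U B)
    (hcross : crosses A B) :
    btw ends (A \ B) (B \ A) = ∅ ∧
    btw ends (A ∩ B) (A ∪ B)ᶜ = ∅ ∧
    (let α := (p + 1) / 2
     let e₁ := btw ends (A ∩ B) (A \ B)
     let e₂ := btw ends (A ∩ B) (B \ A)
     let e₃ := btw ends (A \ B) (A ∪ B)ᶜ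
     let e₄ := btw ends (B \ A) (A ∪ B)ᶜ
     -- two adjacent residual edges are thin of size α, the other two have size α+1
     (e₁.card = α ∧ (e₁ ∩ U).card ≤ 1 ∧ e₂.card = α ∧ (e₂ ∩ U).card ≤ 1 ∧
        e₃.card = α + 1 ∧ e₄.card = α + 1) ∨
     (e₁.card = α ∧ (e₁ ∩ U).card ≤ 1 ∧ e₃.card = α ∧ (e₃ ∩ U).card ≤ 1 ∧
        e₂.card = α + 1 ∧ e₄.card = α + 1) ∨
     (e₂.card = α ∧ (e₂ ∩ U).card ≤ 1 ∧ e₄.card = α ∧ (e₄ ∩ U).card ≤ 1 ∧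
        e₁.card = α + 1 ∧ e₃.card = α + 1) ∨
     (e₃.card = α ∧ (e₃ ∩ U).card ≤ 1 ∧ e₄.card = α ∧ (e₄ ∩ U).card ≤ 1 ∧
        e₁.card = α + 1 ∧ e₂.card = α + 1)) :=
  stmt11_general p hodd ends U hflex A B hA hB hcross
end

section
/- Let p ≥ 3 be odd and G=(V,E) a (p,2)-flex-connected graph with unsafe edge set U. Suppose a (p,3)-violated set A crosses a (p,3)-violated set B amenably. Then for every (p,3)-violated set C, either A does not cross C or A crosses C amenably. -/
open Finset

variable {V E : Type}

/-!
Let `s, t, u, v` be the quadrants `X ∩ Y`, `X \ Y`, `Y \ X`, `(X ∪ Y)ᶜ` of two crossing violated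
sets and `e(·,·)` the number of edges between two of them. Counting edges gives
`|δ s| + |δ v| + 2 e(t,u) = |δ X| + |δ Y| = |δ t| + |δ u| + 2 e(s,v) = 2p + 4`, while
flex-connectivity gives `|δ q| ≥ p + min 2 (number of unsafe edges of δ q)`. These budgets keep
the unsafe edges of `δ X` off the diagonal pairs `(s,v)`, `(t,u)`, both when `X` crosses `Y`
amenably and when it does not; and, `p` being odd, a pair `(s,u)` with two unsafe edges then
carries exactly `(p + 3)/2` edges and `(t,v)` exactly `(p + 1)/2`.

Suppose `A` crossed `C` non-amenably. After replacing `B` and `C` by their complements if needed,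
all unsafe edges of `δ A` run between `A ∩ B` and `B \ A`, at least two of them between `A ∩ C` and
`C \ A` and one between `A \ C` and `(A ∪ C)ᶜ`. Splitting the quadrants of `(A, C)` by `B` gives
eight cells, each left by some edge; flex-connectivity and parity make their cut sizes sum to at
least `8p + 8`. But every edge between two cells lies in `δ A ∪ δ B ∪ δ C`, so the sum is at most
`6p + 12 < 8p + 8`.
-/

section Counting

variable [Fintype E] [DecidableEq V] [DecidableEq E] (ends : E → V × V)

def cutCard (W : Finset E) (S : Finset V) : ℕ := #(cutOf ends S ∩ W)

def btwCard (W : Finset E) (X Y : Finset V) : ℕ := #(btw ends X Y ∩ W)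

lemma cutCard_eq_sum (W : Finset E) (S : Finset V) :
    cutCard ends W S = ∑ e ∈ W, if Xor ((ends e).1 ∈ S) ((ends e).2 ∈ S) then 1 else 0 := by
  rw [cutCard, cutOf, filter_inter, univ_inter, card_filter]

lemma btwCard_eq_sum (W : Finset E) (X Y : Finset V) :
    btwCard ends W X Y = ∑ e ∈ W,
      if ((ends e).1 ∈ X ∧ (ends e).2 ∈ Y) ∨ ((ends e).1 ∈ Y ∧ (ends e).2 ∈ X) then 1 else 0 := by
  rw [btwCard, _root_.btw, filter_inter, univ_inter, card_filter]

lemma cutCard_univ (S : Finset V) : cutCard ends univ S = #(cutOf ends S) := by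
  rw [cutCard, inter_univ]

lemma btwCard_comm (W : Finset E) (X Y : Finset V) : btwCard ends W X Y = btwCard ends W Y X := by
  simp only [btwCard_eq_sum, or_comm]

lemma btwCard_mono {W W' : Finset E} {X X' Y Y' : Finset V} (hW : W ⊆ W') (hX : X ⊆ X')
    (hY : Y ⊆ Y') : btwCard ends W X Y ≤ btwCard ends W' X' Y' := by
  refine card_le_card (inter_subset_inter (fun e he => ?_) hW)
  simp only [_root_.btw, mem_filter, mem_univ, true_and] at he ⊢
  exact he.imp (And.imp (@hX _) (@hY _)) (And.imp (@hY _) (@hX _))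

lemma btwCard_le_univ (W : Finset E) (X Y : Finset V) :
    btwCard ends W X Y ≤ btwCard ends univ X Y :=
  btwCard_mono ends (subset_univ W) subset_rfl subset_rfl

lemma cutCard_compl [Fintype V] (W : Finset E) (S : Finset V) :
    cutCard ends W Sᶜ = cutCard ends W S := by
  simp only [cutCard_eq_sum, mem_compl, xor_not_not]

lemma cutCard_quadrants [Fintype V] (W : Finset E) (X Y : Finset V) :
    cutCard ends W X = btwCard ends W (X ∩ Y) (Y \ X) + btwCard ends W (X ∩ Y) (X ∪ Y)ᶜ +
        btwCard ends W (X \ Y) (Y \ X) + btwCard ends W (X \ Y) (X ∪ Y)ᶜ ∧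
    cutCard ends W Y = btwCard ends W (X ∩ Y) (X \ Y) + btwCard ends W (X ∩ Y) (X ∪ Y)ᶜ +
        btwCard ends W (X \ Y) (Y \ X) + btwCard ends W (Y \ X) (X ∪ Y)ᶜ ∧
    cutCard ends W (X ∩ Y) = btwCard ends W (X ∩ Y) (X \ Y) + btwCard ends W (X ∩ Y) (Y \ X) +
        btwCard ends W (X ∩ Y) (X ∪ Y)ᶜ ∧
    cutCard ends W (X \ Y) = btwCard ends W (X ∩ Y) (X \ Y) + btwCard ends W (X \ Y) (Y \ X) +
        btwCard ends W (X \ Y) (X ∪ Y)ᶜ ∧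
    cutCard ends W (Y \ X) = btwCard ends W (X ∩ Y) (Y \ X) + btwCard ends W (X \ Y) (Y \ X) +
        btwCard ends W (Y \ X) (X ∪ Y)ᶜ ∧
    cutCard ends W (X ∪ Y)ᶜ = btwCard ends W (X ∩ Y) (X ∪ Y)ᶜ + btwCard ends W (X \ Y) (X ∪ Y)ᶜ +
        btwCard ends W (Y \ X) (X ∪ Y)ᶜ := by
  simp only [cutCard_eq_sum, btwCard_eq_sum, ← sum_add_distrib]
  refine ⟨?_, ?_, ?_, ?_, ?_, ?_⟩ <;> refine sum_congr rfl fun e _ => ?_ <;>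
    by_cases (ends e).1 ∈ X <;> by_cases (ends e).1 ∈ Y <;> by_cases (ends e).2 ∈ X <;>
    by_cases (ends e).2 ∈ Y <;> simp [*]

lemma cutCard_inter_add_cutCard_sdiff (W : Finset E) (X S : Finset V) :
    cutCard ends W (X ∩ S) + cutCard ends W (X \ S) =
      cutCard ends W X + 2 * btwCard ends W (X ∩ S) (X \ S) := by
  simp only [cutCard_eq_sum, btwCard_eq_sum, ← sum_add_distrib, mul_sum]
  refine sum_congr rfl fun e _ => ?_
  by_cases (ends e).1 ∈ X <;> by_cases (ends e).1 ∈ S <;> by_cases (ends e).2 ∈ X <;>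
    by_cases (ends e).2 ∈ S <;> simp [*]

lemma btwCard_split {X Y : Finset V} (hXY : Disjoint X Y) (W : Finset E) (S : Finset V) :
    btwCard ends W X Y = btwCard ends W (X ∩ S) (Y ∩ S) + btwCard ends W (X ∩ S) (Y \ S) +
      btwCard ends W (X \ S) (Y ∩ S) + btwCard ends W (X \ S) (Y \ S) := by
  simp only [btwCard_eq_sum, ← sum_add_distrib]
  refine sum_congr rfl fun e _ => ?_
  have h₁ : (ends e).1 ∈ X → (ends e).1 ∉ Y := fun h => disjoint_left.1 hXY h
  have h₂ : (ends e).2 ∈ X → (ends e).2 ∉ Y := fun h => disjoint_left.1 hXY h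
  by_cases (ends e).1 ∈ X <;> by_cases (ends e).1 ∈ S <;> by_cases (ends e).2 ∈ X <;>
    by_cases (ends e).2 ∈ S <;> by_cases (ends e).1 ∈ Y <;> by_cases (ends e).2 ∈ Y <;> simp_all

lemma btwCard_le_cutCard {S T : Finset V} (hST : Disjoint S T) (W : Finset E) :
    btwCard ends W S T ≤ cutCard ends W S := by
  simp only [btwCard_eq_sum, cutCard_eq_sum]
  refine sum_le_sum fun e _ => ?_
  have h₁ : (ends e).1 ∈ S → (ends e).1 ∉ T := fun h => disjoint_left.1 hST h
  have h₂ : (ends e).2 ∈ S → (ends e).2 ∉ T := fun h => disjoint_left.1 hST h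
  by_cases (ends e).1 ∈ S <;> by_cases (ends e).2 ∈ S <;> by_cases (ends e).1 ∈ T <;>
    by_cases (ends e).2 ∈ T <;> simp_all

lemma sum_btwCard_inter_sdiff_quadrants_le_cutCard [Fintype V] (X Y S : Finset V) :
    btwCard ends univ (X ∩ Y ∩ S) ((X ∩ Y) \ S) + btwCard ends univ ((X \ Y) ∩ S) ((X \ Y) \ S) +
      btwCard ends univ ((Y \ X) ∩ S) ((Y \ X) \ S) +
      btwCard ends univ ((X ∪ Y)ᶜ ∩ S) ((X ∪ Y)ᶜ \ S) ≤ cutCard ends univ S := by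
  simp only [cutCard_eq_sum, btwCard_eq_sum, ← sum_add_distrib]
  refine sum_le_sum fun e _ => ?_
  by_cases (ends e).1 ∈ X <;> by_cases (ends e).1 ∈ Y <;> by_cases (ends e).1 ∈ S <;>
    by_cases (ends e).2 ∈ X <;> by_cases (ends e).2 ∈ Y <;> by_cases (ends e).2 ∈ S <;> simp [*]

end Counting

namespace Finset

variable [Fintype V]

lemma ne_univ_of_disjoint {S T : Finset V} (hST : Disjoint S T) (hT : T.Nonempty) : S ≠ univ := by
  rintro rfl
  obtain ⟨x, hx⟩ := hT
  exact disjoint_left.1 hST (mem_univ x) hx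

variable [DecidableEq V] (X Y : Finset V)

lemma sdiff_compl_eq_inter : X \ Yᶜ = X ∩ Y := by ext; simp

lemma compl_sdiff_eq_compl_union : Yᶜ \ X = (X ∪ Y)ᶜ := by ext; simp [and_comm]

lemma compl_union_compl_eq_sdiff : (X ∪ Yᶜ)ᶜ = Y \ X := by ext; simp [and_comm]

end Finset

section Complement

variable [DecidableEq V] [Fintype E] [DecidableEq E] {ends : E → V × V}

lemma violatedSet_iff {p : ℕ} {U : Finset E} {S : Finset V} :
    violatedSet p ends U S ↔ cutCard ends univ S = p + 2 ∧ 3 ≤ cutCard ends U S := by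
  rw [violatedSet, cutCard_univ, cutCard]

variable [Fintype V]

lemma crosses.compl_right {X Y : Finset V} (h : crosses X Y) : crosses X Yᶜ := by
  obtain ⟨ht, hs, hu, hv⟩ := h
  rw [crosses, ← sdiff_eq_inter_compl, sdiff_compl_eq_inter, compl_sdiff_eq_compl_union,
    compl_union_compl_eq_sdiff]
  exact ⟨hs, ht, hv, hu⟩

lemma violatedSet.compl {p : ℕ} {U : Finset E} {S : Finset V} (h : violatedSet p ends U S) :
    violatedSet p ends U Sᶜ := by
  rwa [violatedSet_iff, cutCard_compl, cutCard_compl, ← violatedSet_iff]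

end Complement

section Flex

variable [Fintype V] [Fintype E] [DecidableEq V] [DecidableEq E] {p : ℕ} {ends : E → V × V}
  {U : Finset E}

lemma nonempty_and_ne_univ_of_cutCard_pos {W : Finset E} {S : Finset V}
    (h : 0 < cutCard ends W S) : S.Nonempty ∧ S ≠ univ := by
  obtain ⟨e, he⟩ := card_pos.1 h
  simp only [cutOf, mem_inter, mem_filter, mem_univ, true_and] at he
  rcases he.1 with ⟨h₁, h₂⟩ | ⟨h₁, h₂⟩
  · exact ⟨⟨_, h₁⟩, fun hS => h₂ (hS ▸ mem_univ _)⟩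
  · exact ⟨⟨_, h₁⟩, fun hS => h₂ (hS ▸ mem_univ _)⟩

lemma flexConn.add_min_le_cutCard (hflex : flexConn p ends U) {S : Finset V}
    (hS : S.Nonempty) (hSV : S ≠ univ) : p + min 2 (cutCard ends U S) ≤ cutCard ends univ S := by
  obtain ⟨F, hF, hFcard⟩ := exists_subset_card_eq (min_le_right 2 (cutCard ends U S))
  have hcut := hflex F (hF.trans inter_subset_right) (hFcard ▸ min_le_left _ _) S hS hSV
  rw [card_sdiff_of_subset (hF.trans inter_subset_left), hFcard] at hcut
  have hF' : min 2 (cutCard ends U S) ≤ #(cutOf ends S) :=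
    (min_le_right _ _).trans (card_le_card inter_subset_left)
  rw [cutCard_univ]
  omega

lemma flexConn.add_min_le_cutCard_of_pos (hflex : flexConn p ends U) {S : Finset V}
    (hS : 0 < cutCard ends univ S) : p + min 2 (cutCard ends U S) ≤ cutCard ends univ S :=
  hflex.add_min_le_cutCard (nonempty_and_ne_univ_of_cutCard_pos hS).1
    (nonempty_and_ne_univ_of_cutCard_pos hS).2

lemma flexConn.add_min_le_cutCard_quadrants (hflex : flexConn p ends U) {X Y : Finset V} (hXY : crosses X Y) :
    p + min 2 (cutCard ends U (X ∩ Y)) ≤ cutCard ends univ (X ∩ Y) ∧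
    p + min 2 (cutCard ends U (X \ Y)) ≤ cutCard ends univ (X \ Y) ∧
    p + min 2 (cutCard ends U (Y \ X)) ≤ cutCard ends univ (Y \ X) ∧
    p + min 2 (cutCard ends U (X ∪ Y)ᶜ) ≤ cutCard ends univ (X ∪ Y)ᶜ := by
  obtain ⟨ht, hs, hu, hv⟩ := hXY
  have hst : Disjoint (X ∩ Y) (X \ Y) := disjoint_left.2 fun _ h h' => by simp_all
  have huv : Disjoint (Y \ X) (X ∪ Y)ᶜ := disjoint_left.2 fun _ h h' => by simp_all
  exact ⟨hflex.add_min_le_cutCard hs (ne_univ_of_disjoint hst ht),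
    hflex.add_min_le_cutCard ht (ne_univ_of_disjoint hst.symm hs),
    hflex.add_min_le_cutCard hu (ne_univ_of_disjoint huv hv),
    hflex.add_min_le_cutCard hv (ne_univ_of_disjoint huv.symm hu)⟩

end Flex

section CrossingPair

variable [Fintype V] [Fintype E] [DecidableEq V] [DecidableEq E] {p : ℕ} {ends : E → V × V}
  {U : Finset E} {X Y : Finset V}

/-- An unsafe edge between `X ∩ Y` and `(X ∪ Y)ᶜ` makes `|δ (X ∩ Y)| + |δ (X ∪ Y)ᶜ| ≥ 2p + 4`,
leaving `X \ Y` and `Y \ X` cuts of size `p + 1`, too small to hold the unsafe edges of `δ Y`. -/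
lemma unsafe_diagonal_eq_zero_of_not_amenable (hflex : flexConn p ends U)
    (hX : violatedSet p ends U X) (hY : violatedSet p ends U Y) (hXY : crosses X Y)
    (hsu : 1 ≤ btwCard ends U (X ∩ Y) (Y \ X)) (htv : 1 ≤ btwCard ends U (X \ Y) (X ∪ Y)ᶜ) :
    btwCard ends U (X ∩ Y) (X ∪ Y)ᶜ = 0 ∧ btwCard ends U (X \ Y) (Y \ X) = 0 := by
  obtain ⟨hXU, hYU, hsU, htU, huU, hvU⟩ := cutCard_quadrants ends U X Y
  obtain ⟨hX', hY', hs, ht, hu, hv⟩ := cutCard_quadrants ends univ X Y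
  obtain ⟨bs, bt, bu, bv⟩ := hflex.add_min_le_cutCard_quadrants hXY
  rw [violatedSet_iff] at hX hY
  have := btwCard_le_univ ends U (X ∩ Y) (X ∪ Y)ᶜ
  have := btwCard_le_univ ends U (X \ Y) (Y \ X)
  omega

lemma unsafe_diagonal_eq_zero_of_amenable (hflex : flexConn p ends U) (hodd : Odd p)
    (hX : violatedSet p ends U X) (hY : violatedSet p ends U Y) (hXY : crosses X Y)
    (hsu : btwCard ends U (X ∩ Y) (Y \ X) = 0) :
    btwCard ends U (X ∩ Y) (X ∪ Y)ᶜ = 0 ∧ btwCard ends U (X \ Y) (Y \ X) = 0 := by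
  obtain ⟨r, rfl⟩ := hodd
  obtain ⟨hXU, hYU, hsU, htU, huU, hvU⟩ := cutCard_quadrants ends U X Y
  obtain ⟨hX', hY', hs, ht, hu, hv⟩ := cutCard_quadrants ends univ X Y
  obtain ⟨bs, bt, bu, bv⟩ := hflex.add_min_le_cutCard_quadrants hXY
  rw [violatedSet_iff] at hX hY
  have := btwCard_le_univ ends U (X ∩ Y) (X ∪ Y)ᶜ
  have := btwCard_le_univ ends U (X \ Y) (Y \ X)
  omega

/-- Here `|δ (X ∩ Y)|, |δ (Y \ X)| ≥ p + 2`, and `|δ (X \ Y)| + |δ (X ∪ Y)ᶜ| ≥ 2p + 2` because the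
unsafe edges of `δ Y` lie in these two cuts; as `p` is odd, the edge budget is then exhausted. -/
lemma btwCard_quadrants_of_heavy (hflex : flexConn p ends U) (hodd : Odd p)
    (hX : violatedSet p ends U X) (hY : violatedSet p ends U Y) (hXY : crosses X Y)
    (hsu : 2 ≤ btwCard ends U (X ∩ Y) (Y \ X)) (hsv : btwCard ends U (X ∩ Y) (X ∪ Y)ᶜ = 0)
    (htu : btwCard ends U (X \ Y) (Y \ X) = 0) :
    2 * btwCard ends univ (X ∩ Y) (Y \ X) = p + 3 ∧
    2 * btwCard ends univ (X \ Y) (X ∪ Y)ᶜ = p + 1 ∧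
    btwCard ends univ (X ∩ Y) (X ∪ Y)ᶜ = 0 ∧ btwCard ends univ (X \ Y) (Y \ X) = 0 := by
  obtain ⟨r, rfl⟩ := hodd
  obtain ⟨hXU, hYU, hsU, htU, huU, hvU⟩ := cutCard_quadrants ends U X Y
  obtain ⟨hX', hY', hs, ht, hu, hv⟩ := cutCard_quadrants ends univ X Y
  obtain ⟨bs, bt, bu, bv⟩ := hflex.add_min_le_cutCard_quadrants hXY
  rw [violatedSet_iff] at hX hY
  omega

end CrossingPair

section Cells

variable [Fintype V] [Fintype E] [DecidableEq V] [DecidableEq E] {ends : E → V × V}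

lemma btwCard_eq_add_of_diagonal_eq_zero {W : Finset E} {X Y P Q : Finset V} (hP : P ⊆ X)
    (hQ : Disjoint Q X) (hsv : btwCard ends W (X ∩ Y) (X ∪ Y)ᶜ = 0)
    (htu : btwCard ends W (X \ Y) (Y \ X) = 0) :
    btwCard ends W P Q = btwCard ends W (P ∩ Y) (Q ∩ Y) + btwCard ends W (P \ Y) (Q \ Y) := by
  have hPQ : Disjoint P Q := (hQ.mono_right hP).symm
  have h₁ := btwCard_mono ends subset_rfl (inter_subset_inter_right hP) (X := P ∩ Y) (Y := Q \ Y)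
    (W := W) (Y' := (X ∪ Y)ᶜ) fun v hv => by
      simp only [mem_sdiff, mem_compl, mem_union, not_or] at hv ⊢
      exact ⟨disjoint_left.1 hQ hv.1, hv.2⟩
  have h₂ := btwCard_mono ends subset_rfl (sdiff_subset_sdiff hP subset_rfl) (X := P \ Y)
    (Y := Q ∩ Y) (W := W) (Y' := Y \ X) fun v hv => by
      simp only [mem_inter, mem_sdiff] at hv ⊢
      exact ⟨hv.2, disjoint_left.1 hQ hv.1⟩
  have := btwCard_split ends hPQ W Y
  omega

variable {p : ℕ} {U : Finset E}

lemma flexConn.add_min_le_cutCard_of_btwCard_pos (hflex : flexConn p ends U) {S T : Finset V}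
    (hST : Disjoint S T) (h : 0 < btwCard ends univ S T) :
    p + min 2 (btwCard ends U S T) ≤ cutCard ends univ S ∧
      p + min 2 (btwCard ends U S T) ≤ cutCard ends univ T := by
  have hS := btwCard_le_cutCard ends hST U
  have hS' := btwCard_le_cutCard ends hST univ
  have hT := btwCard_le_cutCard ends hST.symm U
  have hT' := btwCard_le_cutCard ends hST.symm univ
  rw [btwCard_comm] at hT hT'
  have := hflex.add_min_le_cutCard_of_pos (S := S) (by omega)
  have := hflex.add_min_le_cutCard_of_pos (S := T) (by omega)
  omega

variable {X Y Z : Finset V}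

lemma btwCard_cells_of_heavy (hflex : flexConn p ends U) (hodd : Odd p) (hX : violatedSet p ends U X)
    (hY : violatedSet p ends U Y) (hZ : violatedSet p ends U Z) (hXY : crosses X Y)
    (hXZ : crosses X Z) (hYsv : btwCard ends U (X ∩ Y) (X ∪ Y)ᶜ = 0)
    (hYtu : btwCard ends U (X \ Y) (Y \ X) = 0) (hYtv : btwCard ends U (X \ Y) (X ∪ Y)ᶜ = 0)
    (hZsu : 2 ≤ btwCard ends U (X ∩ Z) (Z \ X)) (hZtv : 1 ≤ btwCard ends U (X \ Z) (X ∪ Z)ᶜ)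
    (hZsv : btwCard ends U (X ∩ Z) (X ∪ Z)ᶜ = 0) (hZtu : btwCard ends U (X \ Z) (Z \ X) = 0) :
    2 ≤ btwCard ends U (X ∩ Z ∩ Y) (Z \ X ∩ Y) ∧ 1 ≤ btwCard ends U (X \ Z ∩ Y) ((X ∪ Z)ᶜ ∩ Y) ∧
      1 ≤ btwCard ends univ ((X ∩ Z) \ Y) ((Z \ X) \ Y) ∧
      1 ≤ btwCard ends univ ((X \ Z) \ Y) ((X ∪ Z)ᶜ \ Y) := by
  have hXsu : 2 ≤ btwCard ends U (X ∩ Y) (Y \ X) := by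
    have := (cutCard_quadrants ends U X Y).1
    have := (violatedSet_iff.1 hX).2
    omega
  obtain ⟨hYsu', hYtv', hYsv', hYtu'⟩ :=
    btwCard_quadrants_of_heavy hflex hodd hX hY hXY hXsu hYsv hYtu
  obtain ⟨hZsu', hZtv', hZsv', hZtu'⟩ :=
    btwCard_quadrants_of_heavy hflex hodd hX hZ hXZ hZsu hZsv hZtu
  have ha : X ∩ Z ⊆ X := inter_subset_left
  have hb : X \ Z ⊆ X := sdiff_subset
  have hc : Disjoint (Z \ X) X := sdiff_disjoint
  have hd : Disjoint (X ∪ Z)ᶜ X := disjoint_left.2 fun _ h h' => by simp_all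
  have hacU := btwCard_eq_add_of_diagonal_eq_zero ha hc hYsv hYtu
  have hbdU := btwCard_eq_add_of_diagonal_eq_zero hb hd hYsv hYtu
  have hac := btwCard_eq_add_of_diagonal_eq_zero ha hc hYsv' hYtu'
  have hbd := btwCard_eq_add_of_diagonal_eq_zero hb hd hYsv' hYtu'
  have hsu := btwCard_eq_add_of_diagonal_eq_zero (inter_subset_left : X ∩ Y ⊆ X)
    (sdiff_disjoint : Disjoint (Y \ X) X) hZsv' hZtu'
  rw [inter_right_comm, show Y \ X ∩ Z = Z \ X ∩ Y by ext; simp; tauto,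
    show (X ∩ Y) \ Z = X \ Z ∩ Y by ext; simp; tauto,
    show (Y \ X) \ Z = (X ∪ Z)ᶜ ∩ Y by ext; simp; tauto] at hsu
  have := btwCard_mono ends subset_rfl (sdiff_subset_sdiff ha subset_rfl)
    (Y' := (X ∪ Y)ᶜ) (X := (X ∩ Z) \ Y) (Y := (Z \ X) \ Y) (W := U) fun v hv => by simp_all
  have := btwCard_mono ends subset_rfl (sdiff_subset_sdiff hb subset_rfl)
    (Y' := (X ∪ Y)ᶜ) (X := (X \ Z) \ Y) (Y := (X ∪ Z)ᶜ \ Y) (W := U) fun v hv => by simp_all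
  have := btwCard_le_univ ends U (X ∩ Z ∩ Y) (Z \ X ∩ Y)
  have := btwCard_le_univ ends U (X \ Z ∩ Y) ((X ∪ Z)ᶜ ∩ Y)
  omega

lemma false_of_heavy_crossings (hflex : flexConn p ends U) (hp : 3 ≤ p) (hodd : Odd p)
    (hX : violatedSet p ends U X) (hY : violatedSet p ends U Y) (hZ : violatedSet p ends U Z)
    (hXY : crosses X Y) (hXZ : crosses X Z) (hYsv : btwCard ends U (X ∩ Y) (X ∪ Y)ᶜ = 0)
    (hYtu : btwCard ends U (X \ Y) (Y \ X) = 0) (hYtv : btwCard ends U (X \ Y) (X ∪ Y)ᶜ = 0)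
    (hZsu : 2 ≤ btwCard ends U (X ∩ Z) (Z \ X)) (hZtv : 1 ≤ btwCard ends U (X \ Z) (X ∪ Z)ᶜ)
    (hZsv : btwCard ends U (X ∩ Z) (X ∪ Z)ᶜ = 0) (hZtu : btwCard ends U (X \ Z) (Z \ X) = 0) :
    False := by
  obtain ⟨ha₁c₁, hb₁d₁, ha₀c₀, hb₀d₀⟩ :=
    btwCard_cells_of_heavy hflex hodd hX hY hZ hXY hXZ hYsv hYtu hYtv hZsu hZtv hZsv hZtu
  obtain ⟨hac, hbd, -, -⟩ := btwCard_quadrants_of_heavy hflex hodd hX hZ hXZ hZsu hZsv hZtu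
  obtain ⟨-, hZ', ha, hb, hc, hd⟩ := cutCard_quadrants ends univ X Z
  have hsplit_a := cutCard_inter_add_cutCard_sdiff ends univ (X ∩ Z) Y
  have hsplit_b := cutCard_inter_add_cutCard_sdiff ends univ (X \ Z) Y
  have hsplit_c := cutCard_inter_add_cutCard_sdiff ends univ (Z \ X) Y
  have hsplit_d := cutCard_inter_add_cutCard_sdiff ends univ (X ∪ Z)ᶜ Y
  have hinside := sum_btwCard_inter_sdiff_quadrants_le_cutCard ends X Z Y
  have hdisj : ∀ S T : Finset V, Disjoint S T →
      Disjoint (S ∩ Y) (T ∩ Y) ∧ Disjoint (S \ Y) (T \ Y) :=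
    fun S T h => ⟨h.mono inter_subset_left inter_subset_left, h.mono sdiff_subset sdiff_subset⟩
  have hac_disj : Disjoint (X ∩ Z) (Z \ X) := disjoint_left.2 fun _ h h' => by simp_all
  have hbd_disj : Disjoint (X \ Z) (X ∪ Z)ᶜ := disjoint_left.2 fun _ h h' => by simp_all
  have := hflex.add_min_le_cutCard_of_btwCard_pos (hdisj _ _ hac_disj).1
    ((btwCard_le_univ ends U _ _).trans_lt' (by omega))
  have := hflex.add_min_le_cutCard_of_btwCard_pos (hdisj _ _ hbd_disj).1
    ((btwCard_le_univ ends U _ _).trans_lt' (by omega))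
  have := hflex.add_min_le_cutCard_of_btwCard_pos (hdisj _ _ hac_disj).2 (by omega)
  have := hflex.add_min_le_cutCard_of_btwCard_pos (hdisj _ _ hbd_disj).2 (by omega)
  have := (violatedSet_iff.1 hY).1
  have := (violatedSet_iff.1 hZ).1
  -- The cells inside `Z` have cut sizes summing to `|δ Z|` mod 2, so they exceed their lower
  -- bounds `4p + 4` in total; likewise outside `Z`.
  obtain ⟨r, rfl⟩ := hodd
  omega

end Cells

section Amenability

variable [Fintype V] [Fintype E] [DecidableEq V] [DecidableEq E] {p : ℕ} {ends : E → V × V}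
  {U : Finset E} {X : Finset V}

lemma exists_crossing_unsafe_inside_of_amenablyCrosses (hflex : flexConn p ends U) (hodd : Odd p)
    (hX : violatedSet p ends U X) {B : Finset V} (hB : violatedSet p ends U B)
    (hXB : amenablyCrosses ends U X B) :
    ∃ Y, violatedSet p ends U Y ∧ crosses X Y ∧ btwCard ends U (X ∩ Y) (X ∪ Y)ᶜ = 0 ∧
      btwCard ends U (X \ Y) (Y \ X) = 0 ∧ btwCard ends U (X \ Y) (X ∪ Y)ᶜ = 0 := by
  obtain ⟨hcross, hsu | htv⟩ := hXB
  · obtain ⟨hsv, htu⟩ :=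
      unsafe_diagonal_eq_zero_of_amenable hflex hodd hX hB hcross (card_eq_zero.2 hsu)
    refine ⟨Bᶜ, hB.compl, hcross.compl_right, ?_⟩
    simp only [← sdiff_eq_inter_compl, sdiff_compl_eq_inter, compl_sdiff_eq_compl_union,
      compl_union_compl_eq_sdiff]
    exact ⟨htu, hsv, card_eq_zero.2 hsu⟩
  · have htv' : btwCard ends U (X ∩ Bᶜ) (Bᶜ \ X) = 0 := by
      rw [← sdiff_eq_inter_compl, compl_sdiff_eq_compl_union]
      exact card_eq_zero.2 htv
    obtain ⟨hsv, htu⟩ :=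
      unsafe_diagonal_eq_zero_of_amenable hflex hodd hX hB.compl hcross.compl_right htv'
    simp only [← sdiff_eq_inter_compl, sdiff_compl_eq_inter, compl_sdiff_eq_compl_union,
      compl_union_compl_eq_sdiff] at hsv htu
    exact ⟨B, hB, hcross, htu, hsv, card_eq_zero.2 htv⟩

lemma exists_crossing_heavy_of_not_amenablyCrosses (hflex : flexConn p ends U)
    (hX : violatedSet p ends U X) {C : Finset V} (hC : violatedSet p ends U C)
    (hXC : crosses X C) (hnot : ¬ amenablyCrosses ends U X C) :
    ∃ Z, violatedSet p ends U Z ∧ crosses X Z ∧ 2 ≤ btwCard ends U (X ∩ Z) (Z \ X) ∧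
      1 ≤ btwCard ends U (X \ Z) (X ∪ Z)ᶜ ∧ btwCard ends U (X ∩ Z) (X ∪ Z)ᶜ = 0 ∧
      btwCard ends U (X \ Z) (Z \ X) = 0 := by
  obtain ⟨hsu, htv⟩ : 1 ≤ btwCard ends U (X ∩ C) (C \ X) ∧ 1 ≤ btwCard ends U (X \ C) (X ∪ C)ᶜ := by
    simp only [amenablyCrosses, hXC, true_and, not_or, ← nonempty_iff_ne_empty] at hnot
    exact ⟨card_pos.2 hnot.1, card_pos.2 hnot.2⟩
  obtain ⟨hsv, htu⟩ := unsafe_diagonal_eq_zero_of_not_amenable hflex hX hC hXC hsu htv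
  have := (cutCard_quadrants ends U X C).1
  have := (violatedSet_iff.1 hX).2
  by_cases hsu₂ : 2 ≤ btwCard ends U (X ∩ C) (C \ X)
  · exact ⟨C, hC, hXC, hsu₂, htv, hsv, htu⟩
  · refine ⟨Cᶜ, hC.compl, hXC.compl_right, ?_⟩
    simp only [← sdiff_eq_inter_compl, sdiff_compl_eq_inter, compl_sdiff_eq_compl_union,
      compl_union_compl_eq_sdiff]
    exact ⟨by omega, hsu, htu, hsv⟩

end Amenability

theorem stmt15 [Fintype V] [Fintype E] [DecidableEq V] [DecidableEq E]
    (p : ℕ) (hp : 3 ≤ p) (hodd : Odd p) (ends : E → V × V) (U : Finset E)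
    (hflex : flexConn p ends U) (A B : Finset V)
    (hA : violatedSet p ends U A) (hB : violatedSet p ends U B)
    (hAB : amenablyCrosses ends U A B) :
    ∀ C : Finset V, violatedSet p ends U C →
      ¬ crosses A C ∨ amenablyCrosses ends U A C := by
  intro C hC
  by_cases hAC : amenablyCrosses ends U A C
  · exact Or.inr hAC
  refine Or.inl fun hcross => ?_
  obtain ⟨Y, hY, hAY, hYsv, hYtu, hYtv⟩ :=
    exists_crossing_unsafe_inside_of_amenablyCrosses hflex hodd hA hB hAB
  obtain ⟨Z, hZ, hAZ, hZsu, hZtv, hZsv, hZtu⟩ :=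
    exists_crossing_heavy_of_not_amenablyCrosses hflex hA hC hcross hAC
  exact false_of_heavy_crossings hflex hp hodd hA hY hZ hAY hAZ hYsv hYtu hYtv hZsu hZtv hZsv hZtu
end
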